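/- Let H be a Hopf algebra over a commutative ring k and A a right H-comodule algebra with coinvariant subalgebra B = { b ∈ A | ρ(b) = b ⊗ 1 }. If there exists a convolution invertible right H-colinear map λ : H → A, then the canonical map can : A ⊗_B A → A ⊗_k H, a ⊗ a' ↦ Σ a a'₍₀₎ ⊗ a'₍₁₎, is bijective; an inverse is given by a ⊗ h ↦ Σ a λ̄(h₍₁₎) ⊗_B λ(h₍₂₎), where λ̄ is the convolution inverse of λ. -/

import Mathlib

open TensorProduct

set_option maxHeartbeats 1000000
set_option synthInstance.maxHeartbeats 400000

noncomputable section

variable {k H A : Type*} [CommRing k] [Ring H] [HopfAlgebra k H] [Ring A] [Algebra k A]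

/-- Convolution product of two linear maps from a coalgebra to an algebra. -/
def convA (f g : H →ₗ[k] A) : H →ₗ[k] A :=
  LinearMap.mul' k A ∘ₗ TensorProduct.map f g ∘ₗ Coalgebra.comul

/-- The unit of the convolution algebra `Hom_k(H, A)`. -/
def convUnit : H →ₗ[k] A :=
  Algebra.linearMap k A ∘ₗ Coalgebra.counit

/-- `ρ : A → A ⊗ H` is a coassociative counital coaction. -/
def IsCoaction (ρ : A →ₐ[k] A ⊗[k] H) : Prop :=
  (∀ a : A, (TensorProduct.assoc k A H H) ((ρ.toLinearMap.rTensor H) (ρ a)) =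
      (Coalgebra.comul (R := k) (A := H)).lTensor A (ρ a)) ∧
  (∀ a : A, (TensorProduct.rid k A) ((Coalgebra.counit (R := k) (A := H)).lTensor A (ρ a)) = a)

/-- Right `H`-colinearity of a map `H → A` with respect to a coaction on `A` and the
regular coaction (the coproduct) on `H`. -/
def IsColinearMap (ρ : A →ₐ[k] A ⊗[k] H) (lam : H →ₗ[k] A) : Prop :=
  ρ.toLinearMap ∘ₗ lam = lam.rTensor H ∘ₗ Coalgebra.comul

/-- The set of `H`-coinvariants of `A`. -/
def coinvSet (ρ : A →ₐ[k] A ⊗[k] H) : Set A := {b | ρ b = b ⊗ₜ[k] (1 : H)}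

/-- The canonical map `A ⊗ A → A ⊗ H`, `a ⊗ a' ↦ ∑ a a'₍₀₎ ⊗ a'₍₁₎`. -/
def canMap (ρ : A →ₐ[k] A ⊗[k] H) : A ⊗[k] A →ₗ[k] A ⊗[k] H :=
  (LinearMap.mul' k A).rTensor H ∘ₗ (TensorProduct.assoc k A A H).symm.toLinearMap ∘ₗ
    ρ.toLinearMap.lTensor A

/-- The map `A ⊗ H → A ⊗ A`, `a ⊗ h ↦ ∑ a λ̄(h₍₁₎) ⊗ λ(h₍₂₎)`. -/
def chiMap (lam lamBar : H →ₗ[k] A) : A ⊗[k] H →ₗ[k] A ⊗[k] A :=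
  TensorProduct.map (LinearMap.mul' k A ∘ₗ lamBar.lTensor A) lam ∘ₗ
    (TensorProduct.assoc k A H H).symm.toLinearMap ∘ₗ
      (Coalgebra.comul (R := k) (A := H)).lTensor A

/-- The submodule of `A ⊗ A` spanned by the `B`-balancing relations, for
`B` the coinvariant subalgebra. -/
def balRel (ρ : A →ₐ[k] A ⊗[k] H) : Submodule k (A ⊗[k] A) :=
  Submodule.span k
    {z | ∃ a a' b : A, b ∈ coinvSet ρ ∧ z = (a * b) ⊗ₜ[k] a' - a ⊗ₜ[k] (b * a')}

open Coalgebra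
section Conv
variable {R R' : Type*} [Ring R] [Algebra k R] [Ring R'] [Algebra k R']

def conv (f g : H →ₗ[k] R) : H →ₗ[k] R :=
  LinearMap.mul' k R ∘ₗ TensorProduct.map f g ∘ₗ Coalgebra.comul

def cunit : H →ₗ[k] R := Algebra.linearMap k R ∘ₗ Coalgebra.counit

lemma conv_apply (f g : H →ₗ[k] R) (h : H) (r : Coalgebra.Repr k h (H × H)) :
    conv f g h = ∑ i ∈ r.index, f (r.left i) * g (r.right i) := by
  simp [conv, ← r.eq, map_sum]

lemma cunit_apply (h : H) : (cunit : H →ₗ[k] R) h = algebraMap k R (counit h) := rfl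

lemma sum_counit_smul (h : H) (r : Coalgebra.Repr k h (H × H)) :
    ∑ i ∈ r.index, (counit (R := k) (r.left i)) • (r.right i) = h := by
  have := congrArg (TensorProduct.lid k H) (sum_counit_tmul_eq r)
  rw [map_sum] at this
  simp only [lid_tmul, one_smul] at this
  exact this

lemma sum_smul_counit (h : H) (r : Coalgebra.Repr k h (H × H)) :
    ∑ i ∈ r.index, (counit (R := k) (r.right i)) • (r.left i) = h := by
  have := congrArg (TensorProduct.rid k H) (sum_tmul_counit_eq r)
  rw [map_sum] at this
  simp only [rid_tmul, one_smul] at this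
  exact this

lemma conv_cunit_left (f : H →ₗ[k] R) : conv cunit f = f := by
  ext h
  rw [conv_apply _ _ h (ℛ k h)]
  calc ∑ i ∈ (ℛ k h).index, cunit ((ℛ k h).left i) * f ((ℛ k h).right i)
      = ∑ i ∈ (ℛ k h).index, f ((counit (R := k) ((ℛ k h).left i)) • ((ℛ k h).right i)) := by
        refine Finset.sum_congr rfl fun i _ => ?_
        rw [map_smul, cunit_apply, Algebra.smul_def]
    _ = f h := by rw [← map_sum, _root_.sum_counit_smul]

lemma conv_cunit_right (f : H →ₗ[k] R) : conv f cunit = f := by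
  ext h
  rw [conv_apply _ _ h (ℛ k h)]
  calc ∑ i ∈ (ℛ k h).index, f ((ℛ k h).left i) * cunit ((ℛ k h).right i)
      = ∑ i ∈ (ℛ k h).index, f ((counit (R := k) ((ℛ k h).right i)) • ((ℛ k h).left i)) := by
        refine Finset.sum_congr rfl fun i _ => ?_
        rw [map_smul, cunit_apply, Algebra.smul_def, ← Algebra.commutes]
    _ = f h := by rw [← map_sum, sum_smul_counit]

lemma conv_assoc (f g t : H →ₗ[k] R) : conv (conv f g) t = conv f (conv g t) := by
  ext h
  set r := ℛ k h with hr
  rw [conv_apply _ _ h r, conv_apply _ _ h r]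
  have key := sum_map_tmul_tmul_eq f g t h (repr := r)
    (a₁ := fun i => ℛ k (r.left i)) (a₂ := fun i => ℛ k (r.right i))
  have key2 := congrArg (LinearMap.mul' k R ∘ₗ (LinearMap.mul' k R).lTensor R) key
  simp only [map_sum, LinearMap.coe_comp, Function.comp_apply, LinearMap.lTensor_tmul,
    LinearMap.mul'_apply] at key2
  calc ∑ i ∈ r.index, (conv f g) (r.left i) * t (r.right i)
      = ∑ i ∈ r.index, ∑ j ∈ (ℛ k (r.left i)).index,
          f ((ℛ k (r.left i)).left j) * (g ((ℛ k (r.left i)).right j) * t (r.right i)) := by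
        refine Finset.sum_congr rfl fun i _ => ?_
        rw [conv_apply _ _ _ (ℛ k (r.left i)), Finset.sum_mul]
        exact Finset.sum_congr rfl fun j _ => mul_assoc _ _ _
    _ = ∑ i ∈ r.index, ∑ j ∈ (ℛ k (r.right i)).index,
          f (r.left i) * (g ((ℛ k (r.right i)).left j) * t ((ℛ k (r.right i)).right j)) :=
        key2.symm
    _ = ∑ i ∈ r.index, f (r.left i) * (conv g t) (r.right i) := by
        refine Finset.sum_congr rfl fun i _ => ?_
        rw [conv_apply _ _ _ (ℛ k (r.right i)), Finset.mul_sum]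

lemma algHom_comp_conv (φ : R →ₐ[k] R') (f g : H →ₗ[k] R) :
    φ.toLinearMap ∘ₗ conv f g = conv (φ.toLinearMap ∘ₗ f) (φ.toLinearMap ∘ₗ g) := by
  ext h
  simp only [LinearMap.coe_comp, Function.comp_apply, AlgHom.toLinearMap_apply]
  rw [conv_apply _ _ h (ℛ k h), conv_apply _ _ h (ℛ k h), map_sum]
  simp

lemma algHom_comp_cunit (φ : R →ₐ[k] R') :
    φ.toLinearMap ∘ₗ (cunit : H →ₗ[k] R) = cunit := by
  ext h; simp [cunit_apply]

lemma conv_antipode_right : conv LinearMap.id (HopfAlgebra.antipode (R := k) (A := H)) = cunit := by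
  have := HopfAlgebra.mul_antipode_lTensor_comul (R := k) (A := H)
  rw [conv, ← LinearMap.lTensor, this]; rfl

lemma conv_antipode_left : conv (HopfAlgebra.antipode (R := k) (A := H)) LinearMap.id = cunit := by
  have := HopfAlgebra.mul_antipode_rTensor_comul (R := k) (A := H)
  rw [conv, ← LinearMap.rTensor, this]; rfl

end Conv

-- element lemmas
lemma tmul_one_mul (b : A) (t : A ⊗[k] H) :
    (b ⊗ₜ[k] (1:H)) * t = (LinearMap.mulLeft k b).rTensor H t := by
  induction t using TensorProduct.induction_on with
  | zero => simp
  | tmul c h => simp [Algebra.TensorProduct.tmul_mul_tmul]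
  | add x y hx hy => simp [mul_add, hx, hy]

lemma canMap_tmul (ρ : A →ₐ[k] A ⊗[k] H) (x y : A) :
    canMap ρ (x ⊗ₜ[k] y) = (x ⊗ₜ[k] (1:H)) * ρ y := by
  have key : ∀ t : A ⊗[k] H,
      (LinearMap.mul' k A).rTensor H ((TensorProduct.assoc k A A H).symm (x ⊗ₜ t)) =
        (x ⊗ₜ[k] (1:H)) * t := by
    intro t
    induction t using TensorProduct.induction_on with
    | zero => simp
    | tmul c h => simp [Algebra.TensorProduct.tmul_mul_tmul]
    | add u v hu hv => simp [tmul_add, mul_add, hu, hv]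
  simpa [canMap] using key (ρ y)

lemma chiMap_tmul (lam lamBar : H →ₗ[k] A) (a : A) (h : H) (r : Coalgebra.Repr k h (H × H)) :
    chiMap lam lamBar (a ⊗ₜ[k] h) =
      ∑ i ∈ r.index, (a * lamBar (r.left i)) ⊗ₜ[k] lam (r.right i) := by
  simp only [chiMap, LinearMap.coe_comp, Function.comp_apply, LinearEquiv.coe_coe,
    LinearMap.lTensor_tmul]
  rw [← r.eq, tmul_sum, map_sum, map_sum]
  simp

section Main
variable (ρ : A →ₐ[k] A ⊗[k] H) (lam lamBar : H →ₗ[k] A)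

abbrev incL : A →ₗ[k] A ⊗[k] H := (Algebra.TensorProduct.includeLeft : A →ₐ[k] A ⊗[k] H).toLinearMap
abbrev incR : H →ₗ[k] A ⊗[k] H := (Algebra.TensorProduct.includeRight : H →ₐ[k] A ⊗[k] H).toLinearMap

lemma incL_apply (a : A) : (incL : A →ₗ[k] A ⊗[k] H) a = a ⊗ₜ[k] 1 := rfl
lemma incR_apply (h : H) : (incR : H →ₗ[k] A ⊗[k] H) h = 1 ⊗ₜ[k] h := rfl

lemma colin_conv (hcolin : IsColinearMap ρ lam) :
    ρ.toLinearMap ∘ₗ lam = conv (incL ∘ₗ lam) incR := by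
  ext h
  have l1 : ρ (lam h) = lam.rTensor H (comul h) := LinearMap.congr_fun hcolin h
  rw [LinearMap.comp_apply, conv_apply _ _ h (ℛ k h), AlgHom.toLinearMap_apply]
  rw [l1, ← (ℛ k h).eq, map_sum]
  refine Finset.sum_congr rfl fun i _ => ?_
  simp [incL_apply, incR_apply, Algebra.TensorProduct.tmul_mul_tmul]

lemma conv_lamlamBar (hinv₁ : convA lam lamBar = convUnit) :
    conv (incL ∘ₗ lam) ((incL : A →ₗ[k] A ⊗[k] H) ∘ₗ lamBar) = cunit := by
  rw [← algHom_comp_conv]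
  show _ ∘ₗ convA lam lamBar = _
  rw [hinv₁]
  exact algHom_comp_cunit _

lemma conv_lamBarlam (hinv₂ : convA lamBar lam = convUnit) :
    conv ((incL : A →ₗ[k] A ⊗[k] H) ∘ₗ lamBar) (incL ∘ₗ lam) = cunit := by
  rw [← algHom_comp_conv]
  show _ ∘ₗ convA lamBar lam = _
  rw [hinv₂]
  exact algHom_comp_cunit _

lemma conv_iRiRbar :
    conv (incR : H →ₗ[k] A ⊗[k] H) (incR ∘ₗ HopfAlgebra.antipode (R := k)) = cunit := by
  have h2 := algHom_comp_conv (k := k) (H := H)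
    (Algebra.TensorProduct.includeRight : H →ₐ[k] A ⊗[k] H)
    LinearMap.id (HopfAlgebra.antipode (R := k))
  rw [conv_antipode_right, algHom_comp_cunit, LinearMap.comp_id] at h2
  exact h2.symm

def wMap : H →ₗ[k] A ⊗[k] H :=
  conv ((incR : H →ₗ[k] A ⊗[k] H) ∘ₗ HopfAlgebra.antipode (R := k)) (incL ∘ₗ lamBar)

lemma conv_u_w (hcolin : IsColinearMap ρ lam) (hinv₁ : convA lam lamBar = convUnit) :
    conv (ρ.toLinearMap ∘ₗ lam) (wMap lamBar) = cunit := by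
  rw [colin_conv ρ lam hcolin, wMap, conv_assoc,
    ← conv_assoc (incR : H →ₗ[k] A ⊗[k] H)
      (incR ∘ₗ HopfAlgebra.antipode (R := k)) ((incL : A →ₗ[k] A ⊗[k] H) ∘ₗ lamBar),
    conv_iRiRbar, conv_cunit_left, conv_lamlamBar lam lamBar hinv₁]

lemma conv_v_u (hinv₂ : convA lamBar lam = convUnit) :
    conv (ρ.toLinearMap ∘ₗ lamBar) (ρ.toLinearMap ∘ₗ lam) = cunit := by
  rw [← algHom_comp_conv]
  show _ ∘ₗ convA lamBar lam = _
  rw [hinv₂]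
  exact algHom_comp_cunit _

lemma rho_lamBar_eq_w (hcolin : IsColinearMap ρ lam) (hinv₁ : convA lam lamBar = convUnit)
    (hinv₂ : convA lamBar lam = convUnit) :
    ρ.toLinearMap ∘ₗ lamBar = wMap lamBar := by
  calc ρ.toLinearMap ∘ₗ lamBar
      = conv (ρ.toLinearMap ∘ₗ lamBar) cunit := (conv_cunit_right _).symm
    _ = conv (ρ.toLinearMap ∘ₗ lamBar)
          (conv (ρ.toLinearMap ∘ₗ lam) (wMap lamBar)) := by
        rw [conv_u_w ρ lam lamBar hcolin hinv₁]
    _ = conv (conv (ρ.toLinearMap ∘ₗ lamBar) (ρ.toLinearMap ∘ₗ lam)) (wMap lamBar) := by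
        rw [conv_assoc]
    _ = conv cunit (wMap lamBar) := by rw [conv_v_u ρ lam lamBar hinv₂]
    _ = wMap lamBar := conv_cunit_left _

lemma conv_iR_w : conv (incR : H →ₗ[k] A ⊗[k] H) (wMap lamBar) = incL ∘ₗ lamBar := by
  rw [wMap, ← conv_assoc, conv_iRiRbar, conv_cunit_left]

lemma conv_lamBar_u (hcolin : IsColinearMap ρ lam) (hinv₂ : convA lamBar lam = convUnit) :
    conv ((incL : A →ₗ[k] A ⊗[k] H) ∘ₗ lamBar) (ρ.toLinearMap ∘ₗ lam) = incR := by
  rw [colin_conv ρ lam hcolin, ← conv_assoc, conv_lamBarlam lam lamBar hinv₂, conv_cunit_left]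

lemma can_chi (hcolin : IsColinearMap ρ lam) (hinv₂ : convA lamBar lam = convUnit) :
    ∀ z : A ⊗[k] H, canMap ρ (chiMap lam lamBar z) = z := by
  intro z
  induction z using TensorProduct.induction_on with
  | zero => simp
  | add x y hx hy => rw [map_add, map_add, hx, hy]
  | tmul a h =>
    rw [chiMap_tmul lam lamBar a h (ℛ k h), map_sum]
    have step : ∀ i ∈ (ℛ k h).index,
        canMap ρ ((a * lamBar ((ℛ k h).left i)) ⊗ₜ[k] lam ((ℛ k h).right i)) =
          (a ⊗ₜ[k] (1:H)) * (((incL : A →ₗ[k] A ⊗[k] H) ∘ₗ lamBar) ((ℛ k h).left i) *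
            ((ρ.toLinearMap ∘ₗ lam) ((ℛ k h).right i))) := by
      intro i _
      rw [canMap_tmul,
        show ((a * lamBar ((ℛ k h).left i)) ⊗ₜ[k] (1:H)) =
          (a ⊗ₜ[k] (1:H)) * ((lamBar ((ℛ k h).left i)) ⊗ₜ[k] (1:H)) by
            simp [Algebra.TensorProduct.tmul_mul_tmul],
        mul_assoc]
      rfl
    rw [Finset.sum_congr rfl step, ← Finset.mul_sum, ← conv_apply _ _ h (ℛ k h),
      conv_lamBar_u ρ lam lamBar hcolin hinv₂, incR_apply,
      Algebra.TensorProduct.tmul_mul_tmul, mul_one, one_mul]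

def gma : A →ₗ[k] A := LinearMap.mul' k A ∘ₗ lamBar.lTensor A ∘ₗ ρ.toLinearMap

lemma gma_apply (c : A) {S : Finset (A × H)} (hS : ρ c = ∑ p ∈ S, p.1 ⊗ₜ[k] p.2) :
    gma ρ lamBar c = ∑ p ∈ S, p.1 * lamBar p.2 := by
  simp only [gma, LinearMap.coe_comp, Function.comp_apply, AlgHom.toLinearMap_apply, hS,
    map_sum, LinearMap.lTensor_tmul, LinearMap.mul'_apply]

lemma coassoc_transport (hρ : IsCoaction ρ) (c : A) {M : Type*} [AddCommMonoid M] [Module k M]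
    (G : (A ⊗[k] H) ⊗[k] H →ₗ[k] M) :
    G (ρ.toLinearMap.rTensor H (ρ c)) =
      G ((TensorProduct.assoc k A H H).symm ((Coalgebra.comul (R := k)).lTensor A (ρ c))) := by
  congr 1
  rw [← hρ.1 c, LinearEquiv.symm_apply_apply]

lemma chi_can_tmul (hρ : IsCoaction ρ) (a a' : A) {S : Finset (A × H)}
    (hS : ρ a' = ∑ p ∈ S, p.1 ⊗ₜ[k] p.2) :
    chiMap lam lamBar (canMap ρ (a ⊗ₜ[k] a')) =
      ∑ p ∈ S, (a * gma ρ lamBar p.1) ⊗ₜ[k] lam p.2 := by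
  set G := TensorProduct.map
    ((LinearMap.mulLeft k a) ∘ₗ LinearMap.mul' k A ∘ₗ lamBar.lTensor A) lam with hG
  have hL : chiMap lam lamBar (canMap ρ (a ⊗ₜ[k] a')) =
      G ((TensorProduct.assoc k A H H).symm ((Coalgebra.comul (R := k)).lTensor A (ρ a'))) := by
    rw [canMap_tmul, hS, Finset.mul_sum]
    simp only [map_sum]
    refine Finset.sum_congr rfl fun p _ => ?_
    rw [Algebra.TensorProduct.tmul_mul_tmul, one_mul,
      chiMap_tmul lam lamBar _ _ (ℛ k p.2), LinearMap.lTensor_tmul, ← (ℛ k p.2).eq, tmul_sum]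
    simp only [map_sum]
    refine Finset.sum_congr rfl fun j _ => ?_
    rw [assoc_symm_tmul, hG, TensorProduct.map_tmul]
    simp [mul_assoc]
  have hR : G (ρ.toLinearMap.rTensor H (ρ a')) =
      ∑ p ∈ S, (a * gma ρ lamBar p.1) ⊗ₜ[k] lam p.2 := by
    rw [hS]
    simp only [map_sum]
    refine Finset.sum_congr rfl fun p _ => ?_
    rw [LinearMap.rTensor_tmul, hG, TensorProduct.map_tmul]
    rfl
  rw [hL, ← coassoc_transport ρ hρ a' G, hR]

lemma sum_gma_lam (hρ : IsCoaction ρ) (hinv₂ : convA lamBar lam = convUnit) (a' : A)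
    {S : Finset (A × H)} (hS : ρ a' = ∑ p ∈ S, p.1 ⊗ₜ[k] p.2) :
    ∑ p ∈ S, gma ρ lamBar p.1 * lam p.2 = a' := by
  set F := LinearMap.mul' k A ∘ₗ
    TensorProduct.map (LinearMap.mul' k A ∘ₗ lamBar.lTensor A) lam with hF
  have h1 : F (ρ.toLinearMap.rTensor H (ρ a')) = ∑ p ∈ S, gma ρ lamBar p.1 * lam p.2 := by
    rw [hS]
    simp only [map_sum]
    refine Finset.sum_congr rfl fun p _ => ?_
    rw [LinearMap.rTensor_tmul, hF]
    rfl
  have h2 : F ((TensorProduct.assoc k A H H).symm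
      ((Coalgebra.comul (R := k)).lTensor A (ρ a'))) = a' := by
    rw [hS]
    simp only [map_sum]
    have step : ∀ p ∈ S, F ((TensorProduct.assoc k A H H).symm
        ((Coalgebra.comul (R := k)).lTensor A (p.1 ⊗ₜ[k] p.2))) =
          Coalgebra.counit (R := k) p.2 • p.1 := by
      intro p _
      rw [LinearMap.lTensor_tmul, ← (ℛ k p.2).eq, tmul_sum]
      simp only [map_sum]
      have : ∀ j ∈ (ℛ k p.2).index, F ((TensorProduct.assoc k A H H).symm
          (p.1 ⊗ₜ[k] ((ℛ k p.2).left j ⊗ₜ[k] (ℛ k p.2).right j))) =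
            p.1 * (lamBar ((ℛ k p.2).left j) * lam ((ℛ k p.2).right j)) := by
        intro j _
        rw [assoc_symm_tmul, hF]
        simp [mul_assoc]
      rw [Finset.sum_congr rfl this, ← Finset.mul_sum, ← conv_apply _ _ p.2 (ℛ k p.2)]
      have hconv : (conv lamBar lam : H →ₗ[k] A) p.2 = algebraMap k A (Coalgebra.counit p.2) := by
        show (convA lamBar lam) p.2 = _
        rw [hinv₂]; rfl
      rw [hconv, ← Algebra.commutes, ← Algebra.smul_def]
    rw [Finset.sum_congr rfl step]
    have := hρ.2 a'
    rw [hS, map_sum, map_sum] at this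
    simpa using this
  rw [← h1, coassoc_transport ρ hρ a' F, h2]

lemma gma_coinv (hρ : IsCoaction ρ) (hcolin : IsColinearMap ρ lam)
    (hinv₁ : convA lam lamBar = convUnit) (hinv₂ : convA lamBar lam = convUnit) (c : A) :
    ρ (gma ρ lamBar c) = gma ρ lamBar c ⊗ₜ[k] (1 : H) := by
  obtain ⟨T, hT⟩ := TensorProduct.exists_finset (ρ c)
  set Ψ := LinearMap.mul' k (A ⊗[k] H) ∘ₗ (wMap (A := A) lamBar).lTensor (A ⊗[k] H) with hΨ
  have h1 : Ψ (ρ.toLinearMap.rTensor H (ρ c)) = ρ (gma ρ lamBar c) := by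
    rw [gma_apply ρ lamBar c hT, map_sum, hT]
    simp only [map_sum]
    refine Finset.sum_congr rfl fun q _ => ?_
    rw [LinearMap.rTensor_tmul, hΨ, LinearMap.comp_apply, LinearMap.lTensor_tmul,
      LinearMap.mul'_apply, map_mul]
    congr 1
    exact (LinearMap.congr_fun
      (rho_lamBar_eq_w ρ lam lamBar hcolin hinv₁ hinv₂) q.2).symm
  have h2 : Ψ ((TensorProduct.assoc k A H H).symm
      ((Coalgebra.comul (R := k)).lTensor A (ρ c))) = gma ρ lamBar c ⊗ₜ[k] (1 : H) := by
    rw [hT]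
    simp only [map_sum]
    have step : ∀ q ∈ T, Ψ ((TensorProduct.assoc k A H H).symm
        ((Coalgebra.comul (R := k)).lTensor A (q.1 ⊗ₜ[k] q.2))) =
          (q.1 * lamBar q.2) ⊗ₜ[k] (1 : H) := by
      intro q _
      rw [LinearMap.lTensor_tmul, ← (ℛ k q.2).eq, tmul_sum]
      simp only [map_sum]
      have inner : ∀ j ∈ (ℛ k q.2).index, Ψ ((TensorProduct.assoc k A H H).symm
          (q.1 ⊗ₜ[k] ((ℛ k q.2).left j ⊗ₜ[k] (ℛ k q.2).right j))) =
            (q.1 ⊗ₜ[k] (1:H)) * ((incR : H →ₗ[k] A ⊗[k] H) ((ℛ k q.2).left j) *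
              wMap (A := A) lamBar ((ℛ k q.2).right j)) := by
        intro j _
        rw [assoc_symm_tmul, hΨ, LinearMap.comp_apply, LinearMap.lTensor_tmul,
          LinearMap.mul'_apply,
          show (q.1 ⊗ₜ[k] (ℛ k q.2).left j : A ⊗[k] H) =
            (q.1 ⊗ₜ[k] (1:H)) * ((1:A) ⊗ₜ[k] (ℛ k q.2).left j) by
              simp [Algebra.TensorProduct.tmul_mul_tmul],
          mul_assoc]
        rfl
      rw [Finset.sum_congr rfl inner, ← Finset.mul_sum, ← conv_apply _ _ q.2 (ℛ k q.2),
        conv_iR_w lamBar, LinearMap.comp_apply, incL_apply,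
        Algebra.TensorProduct.tmul_mul_tmul, mul_one]
    rw [Finset.sum_congr rfl step, ← sum_tmul, ← gma_apply ρ lamBar c hT]
  rw [← h1, coassoc_transport ρ hρ c Ψ, h2]

end Main

theorem stmt_9 (ρ : A →ₐ[k] A ⊗[k] H) (hρ : IsCoaction ρ)
    (lam lamBar : H →ₗ[k] A)
    (hcolin : IsColinearMap ρ lam)
    (hinv₁ : convA lam lamBar = convUnit) (hinv₂ : convA lamBar lam = convUnit) :
    -- the canonical map `A ⊗_B A → A ⊗ H` is bijective, i.e. `can` is surjective and
    -- its kernel is exactly the `B`-balancing relations, with explicit inverse `chiMap`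
    Function.Surjective (canMap ρ) ∧
    LinearMap.ker (canMap ρ) = balRel ρ ∧
    (∀ z : A ⊗[k] H, canMap ρ (chiMap lam lamBar z) = z) ∧
    (∀ w : A ⊗[k] A, chiMap lam lamBar (canMap ρ w) - w ∈ balRel ρ) := by
  
  have part3 : ∀ z : A ⊗[k] H, canMap ρ (chiMap lam lamBar z) = z :=
    can_chi ρ lam lamBar hcolin hinv₂
  have part4 : ∀ w : A ⊗[k] A, chiMap lam lamBar (canMap ρ w) - w ∈ balRel ρ := by
    intro w
    induction w using TensorProduct.induction_on with
    | zero => simp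
    | tmul a a' =>
      obtain ⟨S, hS⟩ := TensorProduct.exists_finset (ρ a')
      rw [chi_can_tmul ρ lam lamBar hρ a a' hS]
      have ha' : (a ⊗ₜ[k] a' : A ⊗[k] A) =
          ∑ p ∈ S, a ⊗ₜ[k] (gma ρ lamBar p.1 * lam p.2) := by
        rw [← tmul_sum, sum_gma_lam ρ lam lamBar hρ hinv₂ a' hS]
      rw [ha', ← Finset.sum_sub_distrib]
      refine Submodule.sum_mem _ fun p _ => Submodule.subset_span ?_
      exact ⟨a, lam p.2, gma ρ lamBar p.1,
        gma_coinv ρ lam lamBar hρ hcolin hinv₁ hinv₂ p.1, rfl⟩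
    | add x y hx hy =>
      have hsplit : chiMap lam lamBar (canMap ρ (x + y)) - (x + y) =
          (chiMap lam lamBar (canMap ρ x) - x) + (chiMap lam lamBar (canMap ρ y) - y) := by
        rw [map_add, map_add]; abel
      rw [hsplit]; exact Submodule.add_mem _ hx hy
  refine ⟨fun z => ⟨chiMap lam lamBar z, part3 z⟩, ?_, part3, part4⟩
  apply le_antisymm
  · intro w hw
    have h0 : canMap ρ w = 0 := hw
    have hmem := part4 w
    rw [h0, map_zero, zero_sub, neg_mem_iff] at hmem
    exact hmem
  · rw [balRel, Submodule.span_le]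
    rintro z ⟨a, a', b, hb, rfl⟩
    have hb' : ρ b = b ⊗ₜ[k] (1 : H) := hb
    simp only [SetLike.mem_coe, LinearMap.mem_ker, map_sub]
    rw [canMap_tmul, canMap_tmul, map_mul, hb', ← mul_assoc,
      Algebra.TensorProduct.tmul_mul_tmul, mul_one, sub_self]
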